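/- Let v_−, x_− ∈ ℝⁿ with v_−·x_− = 0 and |v_−| ≥ μ, let 0 < r < min(|v_−|/2^{3/2}, 1), and let y_− ∈ M_r satisfy A(y_−) = y_−. Then for all t ≤ 0: |ẏ_−(t)| ≤ β₂(n(|x_−|+r)+√n) / ((α+1)(|v_−|/(2√2) − r)(1 − r + |t|(|v_−|/(2√2) − r))^{α+1}) and |y_−(t)| ≤ β₂(n(|x_−|+r)+√n) / (α(α+1)(|v_−|/(2√2) − r)²(1 − r + |t|(|v_−|/(2√2) − r))^{α}). -/

import Mathlib

open MeasureTheory Real Filter Set Topology RealInnerProductSpace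

noncomputable section

namespace Paper

/-- ℝⁿ -/
abbrev Euc (n : ℕ) : Type := EuclideanSpace ℝ (Fin n)

variable {n : ℕ}

/-- the norm `sup_{t ≤ 0} ‖f t‖ + sup_{t ≥ 0} ‖f t‖/(1+t)` on the space `M_r`. -/
def Mnorm (f : ℝ → Euc n) : ℝ :=
  sSup ((fun t => ‖f t‖) '' Iic 0) + sSup ((fun t => ‖f t‖ / (1 + t)) '' Ici 0)

/-- membership in the complete metric space `M_r`. -/
def MemM (r : ℝ) (f : ℝ → Euc n) : Prop :=
  Continuous f ∧ BddAbove ((fun t => ‖f t‖) '' Iic 0) ∧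
    BddAbove ((fun t => ‖f t‖ / (1 + t)) '' Ici 0) ∧ Mnorm f ≤ r

/-- the long range decay conditions on `V^l`. -/
def LongRange (α βl0 βl1 βl2 : ℝ) (Vl : Euc n → ℝ) : Prop :=
  ContDiff ℝ 2 Vl ∧
    (∀ x, |Vl x| ≤ βl0 * (1 + ‖x‖) ^ (-α)) ∧
    (∀ x, ‖gradient Vl x‖ ≤ βl1 * (1 + ‖x‖) ^ (-(α + 1))) ∧
    (∀ x, ‖iteratedFDeriv ℝ 2 Vl x‖ ≤ βl2 * (1 + ‖x‖) ^ (-(α + 2)))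

/-- the short range decay conditions on `V^s`. -/
def ShortRange (α βs1 βs2 βs3 : ℝ) (Vs : Euc n → ℝ) : Prop :=
  ContDiff ℝ 2 Vs ∧
    (∀ x, |Vs x| ≤ βs1 * (1 + ‖x‖) ^ (-(α + 1))) ∧
    (∀ x, ‖gradient Vs x‖ ≤ βs2 * (1 + ‖x‖) ^ (-(α + 2))) ∧
    (∀ x, ‖iteratedFDeriv ℝ 2 Vs x‖ ≤ βs3 * (1 + ‖x‖) ^ (-(α + 3)))

/-- `z` is a C² solution of `z'' = Fl ∘ z` with `z 0 = x0`, `z' → w` along the filter `l`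
(`atBot` for `z_-`, `atTop` for `z_+`), satisfying the growth bound `‖z t - x0 - t w‖ ≤ C |t|`. -/
def IsFreeSol (Fl : Euc n → Euc n) (x0 w : Euc n) (l : Filter ℝ) (C : ℝ)
    (z : ℝ → Euc n) : Prop :=
  ContDiff ℝ 2 z ∧ (∀ t, deriv (deriv z) t = Fl (z t)) ∧ z 0 = x0 ∧
    Tendsto (fun t => deriv z t) l (𝓝 w) ∧ ∀ t, ‖z t - x0 - t • w‖ ≤ C * |t|

/-- the map `A` (or `𝒜` when `xm = 0` and `zm` already contains the base point). -/
def Aop (Fl F : Euc n → Euc n) (zm : ℝ → Euc n) (xm : Euc n)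
    (f : ℝ → Euc n) (t : ℝ) : Euc n :=
  ∫ σ in Iic t, ∫ τ in Iic σ, (F (zm τ + xm + f τ) - Fl (zm τ))

/-- the vector `l(v_-,x_-,y_-)`. -/
def lInt (Fl Fs F : Euc n → Euc n) (zm : ℝ → Euc n) (xm : Euc n) (ym : ℝ → Euc n) : Euc n :=
  (∫ σ in Iic (0:ℝ), ∫ τ in Iic σ, (F (zm τ + xm + ym τ) - Fl (zm τ))) -
    ∫ σ in Ici (0:ℝ), ∫ τ in Ici σ, Fs (zm τ + xm + ym τ)

/-- the vector `l₁(v_-,x_-)`. -/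
def l1Int (Fl : Euc n → Euc n) (zp : ℝ → Euc n) (xm : Euc n) : Euc n :=
  -∫ σ in Ici (0:ℝ), ∫ τ in Ici σ, (Fl (zp τ + xm) - Fl (zp τ))

/-- the vector `l₂(v_-,x_-,y_-)`. -/
def l2Int (Fl : Euc n → Euc n) (zm zp : ℝ → Euc n) (xm : Euc n) (ym : ℝ → Euc n) : Euc n :=
  -∫ σ in Ici (0:ℝ), ∫ τ in Ici σ, (Fl (zm τ + xm + ym τ) - Fl (zp τ + xm))

/-- the function `y_+`. -/
def yplusInt (Fl F : Euc n → Euc n) (zm zp : ℝ → Euc n) (xm : Euc n) (ym : ℝ → Euc n)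
    (t : ℝ) : Euc n :=
  ∫ σ in Ici t, ∫ τ in Ici σ, (F (zm τ + xm + ym τ) - Fl (zp τ))

/-- the vector `W(v_-,x_-)`. -/
def Wvec (Fl : Euc n → Euc n) (zm zp : ℝ → Euc n) (xm : Euc n) : Euc n :=
  (∫ σ in Iic (0:ℝ), ∫ τ in Iic σ, (Fl (zm τ + xm) - Fl (zm τ))) -
    ∫ σ in Ici (0:ℝ), ∫ τ in Ici σ, (Fl (zp τ + xm) - Fl (zp τ))

/-- the map `𝒢_{v_-,x_-}`; here `zm = z_-(v_-,x_-,·)` contains the base point `x_-`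
and `zp h = z_+(ã, x_- + h, ·)`. -/
def Gmap (Fl Fs F : Euc n → Euc n) (zm : ℝ → Euc n) (zp : Euc n → ℝ → Euc n)
    (ym : ℝ → Euc n) (h : Euc n) : Euc n :=
  lInt Fl Fs F zm 0 ym -
    ∫ σ in Ici (0:ℝ), ∫ τ in Ici σ, (Fl (zm τ + ym τ) - Fl (zp h τ))

/-- the vector `W̃(v_-,x_-)`; here `zp0 = z_+(ã, x_-, ·)`. -/
def Wtilde (Fl : Euc n → Euc n) (zm zp0 : ℝ → Euc n) : Euc n :=
  (∫ τ in Iic (0:ℝ), Fl (zm τ)) + ∫ τ in Ici (0:ℝ), Fl (zp0 τ)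

section AuxInt
variable {E : Type*} [NormedAddCommGroup E] [NormedSpace ℝ E] [CompleteSpace E]

omit [CompleteSpace E] in
lemma primitive_Iic_eq (g : ℝ → E) (hint : ∀ b : ℝ, IntegrableOn g (Iic b)) (a u : ℝ) :
    ∫ τ in Iic u, g τ = (∫ τ in Iic a, g τ) + ∫ τ in a..u, g τ := by
  rw [← intervalIntegral.integral_Iic_sub_Iic (hint a) (hint u)]; abel

lemma hasDerivAt_primitive_Iic (g : ℝ → E) (hg : Continuous g)
    (hint : ∀ b : ℝ, IntegrableOn g (Iic b)) (t : ℝ) :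
    HasDerivAt (fun u => ∫ τ in Iic u, g τ) (g t) t := by
  have h : (fun u => ∫ τ in Iic u, g τ)
      = fun u => (∫ τ in Iic t, g τ) + ∫ τ in t..u, g τ :=
    funext fun u => primitive_Iic_eq g hint t u
  rw [h]
  exact (intervalIntegral.integral_hasDerivAt_right (hg.intervalIntegrable _ _)
    (hg.stronglyMeasurableAtFilter _ _) hg.continuousAt).const_add _

lemma hasDerivAt_aux (d c p : ℝ) (hc : 0 < c) (hp : 0 < p) {τ : ℝ} (h : 0 < d - c * τ) :
    HasDerivAt (fun u : ℝ => (d - c * u) ^ (-p) / (c * p)) ((d - c * τ) ^ (-(p + 1))) τ := by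
  have h1 : HasDerivAt (fun u : ℝ => d - c * u) (-c) τ := by
    simpa using ((hasDerivAt_id τ).const_mul c).const_sub d
  have h2 := (Real.hasDerivAt_rpow_const (p := -p) (Or.inl h.ne')).comp τ h1
  have h3 := h2.div_const (c * p)
  refine h3.congr_deriv ?_
  rw [show -(p + 1) = -p - 1 by ring]
  field_simp

lemma tendsto_aux (d c p : ℝ) (hc : 0 < c) (hp : 0 < p) :
    Tendsto (fun u : ℝ => (d - c * u) ^ (-p) / (c * p)) atBot (𝓝 0) := by
  have h1 : Tendsto (fun u : ℝ => d - c * u) atBot atTop := by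
    have := tendsto_atTop_add_const_left atBot d
      (tendsto_neg_atBot_atTop.comp (tendsto_id.const_mul_atBot hc))
    exact this.congr (fun x => by simp; ring)
  have := (tendsto_rpow_neg_atTop hp).comp h1
  simpa using this.div_const (c * p)

omit [CompleteSpace E] in
lemma integrableOn_aux (d c p σ : ℝ) (hc : 0 < c) (hp : 0 < p) (hσ : 0 < d - c * σ) :
    IntegrableOn (fun τ : ℝ => (d - c * τ) ^ (-(p + 1))) (Iic σ) := by
  have key : IntegrableOn (fun u : ℝ => (d + c * u) ^ (-(p + 1))) (Ici (-σ)) := by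
    have hpos : ∀ u : ℝ, -σ ≤ u → 0 < d + c * u := by
      intro u hu; nlinarith
    have hderiv : ∀ u ∈ Ioi (-σ),
        HasDerivAt (fun u : ℝ => -((d + c * u) ^ (-p) / (c * p))) ((d + c * u) ^ (-(p + 1))) u := by
      intro u hu
      have h1 : HasDerivAt (fun u : ℝ => d + c * u) c u := by
        simpa using ((hasDerivAt_id u).const_mul c).const_add d
      have h2 := ((Real.hasDerivAt_rpow_const (p := -p)
        (Or.inl (hpos u (le_of_lt hu)).ne')).comp u h1).div_const (c * p) |>.neg
      refine h2.congr_deriv ?_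
      rw [show -(p + 1) = -p - 1 by ring]
      field_simp
    have hcont : ContinuousWithinAt (fun u : ℝ => -((d + c * u) ^ (-p) / (c * p))) (Ici (-σ)) (-σ) := by
      have h1 : HasDerivAt (fun u : ℝ => d + c * u) c (-σ) := by
        simpa using ((hasDerivAt_id (-σ)).const_mul c).const_add d
      exact (((Real.hasDerivAt_rpow_const (p := -p)
        (Or.inl (by nlinarith : (0:ℝ) < d + c * (-σ)).ne')).comp (-σ) h1).div_const
        (c * p)).neg.continuousAt.continuousWithinAt
    have hnonneg : ∀ u ∈ Ioi (-σ), 0 ≤ (d + c * u) ^ (-(p + 1)) := fun u hu =>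
      Real.rpow_nonneg (le_of_lt (hpos u (le_of_lt hu))) _
    have htend : Tendsto (fun u : ℝ => -((d + c * u) ^ (-p) / (c * p))) atTop (𝓝 0) := by
      have h1 : Tendsto (fun u : ℝ => d + c * u) atTop atTop :=
        tendsto_atTop_add_const_left _ _ (tendsto_id.const_mul_atTop hc)
      have := ((tendsto_rpow_neg_atTop hp).comp h1).div_const (c * p)
      simpa using this.neg
    have := integrableOn_Ioi_deriv_of_nonneg hcont hderiv hnonneg htend
    rwa [integrableOn_Ici_iff_integrableOn_Ioi]
  have := (MeasurePreserving.integrableOn_comp_preimage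
    (Measure.measurePreserving_neg (volume : Measure ℝ))
    (Homeomorph.neg ℝ).measurableEmbedding).2 key
  have heq : (fun x : ℝ => -x) ⁻¹' Ici (-σ) = Iic σ := by ext x; simp
  rw [heq] at this
  refine this.congr_fun (fun x hx => ?_) measurableSet_Iic
  simp [Function.comp]
  ring_nf

lemma integral_aux (d c p σ : ℝ) (hc : 0 < c) (hp : 0 < p) (hσ : 0 < d - c * σ) :
    ∫ τ in Iic σ, (d - c * τ) ^ (-(p + 1)) = (d - c * σ) ^ (-p) / (c * p) := by
  have := integral_Iic_of_hasDerivAt_of_tendsto'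
    (f := fun u : ℝ => (d - c * u) ^ (-p) / (c * p))
    (f' := fun τ : ℝ => (d - c * τ) ^ (-(p + 1)))
    (fun x hx => hasDerivAt_aux d c p hc hp (by simp only [mem_Iic] at hx; nlinarith))
    (integrableOn_aux d c p σ hc hp hσ) (tendsto_aux d c p hc hp)
  simpa using this

end AuxInt

lemma grad_cont (V : Euc n → ℝ) (hV : ContDiff ℝ 2 V) : Continuous (gradient V) := by
  have h1 : ContDiff ℝ 1 (fderiv ℝ V) := hV.fderiv_right (by norm_num)
  exact (InnerProductSpace.toDual ℝ (Euc n)).symm.continuous.comp h1.continuous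

lemma norm_fderiv_fderiv (V : Euc n → ℝ) (x : Euc n) :
    ‖fderiv ℝ (fderiv ℝ V) x‖ = ‖iteratedFDeriv ℝ 2 V x‖ := by
  rw [← norm_iteratedFDeriv_fderiv (n := 1)]
  rw [← norm_iteratedFDeriv_fderiv (n := 0), norm_iteratedFDeriv_zero]

lemma grad_diff (V : Euc n → ℝ) (hV : ContDiff ℝ 2 V) (a w : Euc n) (M : ℝ)
    (hM : ∀ s ∈ Icc (0:ℝ) 1, ‖iteratedFDeriv ℝ 2 V (a + s • w)‖ ≤ M) :
    ‖gradient V (a + w) - gradient V a‖ ≤ M * ‖w‖ := by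
  have hnorm : ‖gradient V (a + w) - gradient V a‖ = ‖fderiv ℝ V (a + w) - fderiv ℝ V a‖ := by
    show ‖(InnerProductSpace.toDual ℝ (Euc n)).symm _ - (InnerProductSpace.toDual ℝ (Euc n)).symm _‖ = _
    rw [← map_sub, LinearIsometryEquiv.norm_map]
  rw [hnorm]
  have h1 : ContDiff ℝ 1 (fderiv ℝ V) := hV.fderiv_right (by norm_num)
  have key := Convex.norm_image_sub_le_of_norm_fderiv_le
    (f := fderiv ℝ V) (s := segment ℝ a (a + w)) (C := M)
    (fun x _ => (h1.differentiable one_ne_zero).differentiableAt)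
    (fun x hx => by
      rw [segment_eq_image'] at hx
      obtain ⟨s, hs, rfl⟩ := hx
      rw [norm_fderiv_fderiv]
      simpa using hM s hs)
    (convex_segment a (a + w)) (left_mem_segment ℝ a (a + w)) (right_mem_segment ℝ a (a + w))
  simpa using key

set_option maxHeartbeats 1600000 in
theorem statement_9
    (n : ℕ) (hn : 2 ≤ n) (α : ℝ) (hα0 : 0 < α) (hα1 : α ≤ 1)
    (Vl Vs : Euc n → ℝ) (βl0 βl1 βl2 βs1 βs2 βs3 : ℝ)
    (hβl0 : 0 < βl0) (hβl1 : 0 < βl1) (hβl2 : 0 < βl2)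
    (hβs1 : 0 < βs1) (hβs2 : 0 < βs2) (hβs3 : 0 < βs3)
    (hVl : LongRange α βl0 βl1 βl2 Vl) (hVs : ShortRange α βs1 βs2 βs3 Vs)
    (Fl Fs F : Euc n → Euc n)
    (hFl : ∀ y, Fl y = -gradient Vl y) (hFs : ∀ y, Fs y = -gradient Vs y)
    (hF : ∀ y, F y = Fl y + Fs y)
    (vm xm : Euc n) (hperp : ⟪vm, xm⟫ = 0) (hvm : Real.sqrt (2 ^ 5 * (n : ℝ) * max βl1 βl2 / α) ≤ ‖vm‖)
    (zm : ℝ → Euc n) (hzm : IsFreeSol Fl 0 vm atBot (2 ^ ((5:ℝ)/2) * Real.sqrt n * βl1 / (α * ‖vm‖)) zm)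
    (r : ℝ) (hr0 : 0 < r) (hr : r < min (‖vm‖ / 2 ^ ((3:ℝ)/2)) 1)
    (ym : ℝ → Euc n) (hym : MemM r ym) (hfix : Aop Fl F zm xm ym = ym)
 :
    ∀ t : ℝ, t ≤ 0 →
      ‖deriv ym t‖ ≤
        (max βl2 βs2) * ((n : ℝ) * (‖xm‖ + r) + Real.sqrt n) /
          ((α + 1) * (‖vm‖ / (2 * Real.sqrt 2) - r) * (1 - r + |t| * (‖vm‖ / (2 * Real.sqrt 2) - r)) ^ (α + 1)) ∧
      ‖ym t‖ ≤
        (max βl2 βs2) * ((n : ℝ) * (‖xm‖ + r) + Real.sqrt n) /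
          (α * (α + 1) * (‖vm‖ / (2 * Real.sqrt 2) - r) ^ 2 * (1 - r + |t| * (‖vm‖ / (2 * Real.sqrt 2) - r)) ^ α) := by
  -- basic numeric facts
  have hs2' : Real.sqrt 2 * Real.sqrt 2 = 2 := Real.mul_self_sqrt (by norm_num)
  have hs2 : (1:ℝ) ≤ Real.sqrt 2 := by
    nlinarith only [hs2', Real.sqrt_nonneg 2]
  have hn2 : (2:ℝ) ≤ (n:ℝ) := by exact_mod_cast hn
  have hn1 : (1:ℝ) ≤ (n:ℝ) := by linarith
  have hsn : Real.sqrt 2 ≤ Real.sqrt n := Real.sqrt_le_sqrt hn2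
  have hsn1 : (1:ℝ) ≤ Real.sqrt n := le_trans hs2 hsn
  have hsnsq : Real.sqrt n * Real.sqrt n = (n:ℝ) := Real.mul_self_sqrt (by positivity)
  have hmaxpos : 0 < max βl1 βl2 := lt_max_of_lt_left hβl1
  have hargpos : 0 < 2 ^ 5 * (n : ℝ) * max βl1 βl2 / α := by positivity
  have hvmpos : 0 < ‖vm‖ := lt_of_lt_of_le (Real.sqrt_pos.mpr hargpos) hvm
  have hvmsq : 2 ^ 5 * (n : ℝ) * max βl1 βl2 / α ≤ ‖vm‖ ^ 2 := by
    have h1 := pow_le_pow_left₀ (Real.sqrt_nonneg _) hvm 2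
    rwa [Real.sq_sqrt hargpos.le] at h1
  have hαsq : 2 ^ 5 * (n:ℝ) * βl1 ≤ α * ‖vm‖ ^ 2 := by
    rw [div_le_iff₀ hα0] at hvmsq
    have h1 := mul_le_mul_of_nonneg_left (le_max_left βl1 βl2)
      (by positivity : (0:ℝ) ≤ 2 ^ 5 * (n:ℝ))
    nlinarith only [h1, hvmsq]
  have h12 : (2:ℝ) ^ ((1:ℝ)/2) = Real.sqrt 2 := by
    rw [← Real.sqrt_eq_rpow]
  have h52 : (2:ℝ) ^ ((5:ℝ)/2) = 4 * Real.sqrt 2 := by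
    rw [show (5:ℝ)/2 = 1 + 1 + 1/2 by norm_num, Real.rpow_add (by norm_num : (0:ℝ) < 2),
      Real.rpow_add (by norm_num : (0:ℝ) < 2), Real.rpow_one, h12]
    ring
  have h32 : (2:ℝ) ^ ((3:ℝ)/2) = 2 * Real.sqrt 2 := by
    rw [show (3:ℝ)/2 = 1 + 1/2 by norm_num, Real.rpow_add (by norm_num : (0:ℝ) < 2), h12,
      Real.rpow_one]
  rw [lt_min_iff, h32] at hr
  obtain ⟨hrc', hr1⟩ := hr
  set c' : ℝ := ‖vm‖ / (2 * Real.sqrt 2) with hc'def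
  set c : ℝ := c' - r with hcdef
  set d : ℝ := 1 - r with hddef
  have hc'pos : 0 < c' := by positivity
  have hcpos : 0 < c := sub_pos.mpr hrc'
  have hdpos : 0 < d := by simp only [hddef]; linarith
  have hcc' : c ≤ c' := by simp only [hcdef]; linarith
  have hc'half : c' ≤ ‖vm‖ / 2 := by
    rw [hc'def, div_le_div_iff₀ (by positivity) (by norm_num)]
    nlinarith only [mul_nonneg hvmpos.le (sub_nonneg.mpr hs2)]
  -- growth bound constant
  set C0 : ℝ := 2 ^ ((5:ℝ)/2) * Real.sqrt n * βl1 / (α * ‖vm‖) with hC0def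
  have hC0le : C0 ≤ ‖vm‖ / 8 := by
    have hA : Real.sqrt 2 * Real.sqrt n * βl1 ≤ (n:ℝ) * βl1 := by
      have h1 : 0 ≤ (Real.sqrt n - Real.sqrt 2) * (Real.sqrt n * βl1) :=
        mul_nonneg (sub_nonneg.mpr hsn) (mul_nonneg (Real.sqrt_nonneg _) hβl1.le)
      have h2 : Real.sqrt n * Real.sqrt n * βl1 = (n:ℝ) * βl1 := by rw [hsnsq]
      nlinarith only [h1, h2]
    rw [hC0def, div_le_div_iff₀ (by positivity) (by norm_num), h52]
    nlinarith only [hA, hαsq]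
  have hgrow : ∀ t : ℝ, ‖zm t - t • vm‖ ≤ C0 * |t| := by
    intro t; have := hzm.2.2.2.2 t; simpa using this
  -- sup-norm bound on ym over (-∞,0]
  have hymr : ∀ τ : ℝ, τ ≤ 0 → ‖ym τ‖ ≤ r := by
    intro τ hτ
    obtain ⟨hyc, hb1, hb2, hnorm⟩ := hym
    have h1 : ‖ym τ‖ ≤ sSup ((fun t => ‖ym t‖) '' Iic 0) := le_csSup hb1 ⟨τ, hτ, rfl⟩
    have h2 : (0:ℝ) ≤ sSup ((fun t => ‖ym t‖ / (1 + t)) '' Ici 0) := by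
      refine le_trans ?_ (le_csSup hb2 ⟨0, Set.self_mem_Ici, rfl⟩)
      positivity
    have h3 : Mnorm ym = sSup ((fun t => ‖ym t‖) '' Iic 0)
        + sSup ((fun t => ‖ym t‖ / (1 + t)) '' Ici 0) := rfl
    rw [h3] at hnorm
    linarith
  -- lower bound on position norm
  have hlow : ∀ τ : ℝ, τ ≤ 0 → ∀ s ∈ Icc (0:ℝ) 1,
      d + c * |τ| ≤ 1 + ‖zm τ + s • xm + s • ym τ‖ := by
    intro τ hτ s hs
    obtain ⟨hs0, hs1⟩ := hs
    have key1 : |τ| * ‖vm‖ ≤ ‖τ • vm + s • xm‖ := by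
      have hsq : ‖τ • vm + s • xm‖ ^ 2 = (|τ| * ‖vm‖) ^ 2 + (|s| * ‖xm‖) ^ 2 := by
        rw [norm_add_sq_real, real_inner_smul_left, real_inner_smul_right, hperp]
        simp [norm_smul, Real.norm_eq_abs]
      nlinarith only [hsq, norm_nonneg (τ • vm + s • xm),
        mul_nonneg (abs_nonneg τ) (norm_nonneg vm), sq_nonneg (|s| * ‖xm‖)]
    have key2 : ‖zm τ - τ • vm‖ ≤ ‖vm‖ / 8 * |τ| :=
      le_trans (hgrow τ) (mul_le_mul_of_nonneg_right hC0le (abs_nonneg τ))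
    have key3 : ‖s • ym τ‖ ≤ r := by
      rw [norm_smul, Real.norm_eq_abs, abs_of_nonneg hs0]
      calc s * ‖ym τ‖ ≤ 1 * r := by
            apply mul_le_mul hs1 (hymr τ hτ) (norm_nonneg _) (by norm_num)
        _ = r := one_mul r
    have hdecomp : zm τ + s • xm + s • ym τ
        = (τ • vm + s • xm) + ((zm τ - τ • vm) + s • ym τ) := by abel
    have htri : ‖τ • vm + s • xm‖ - ‖(zm τ - τ • vm) + s • ym τ‖
        ≤ ‖zm τ + s • xm + s • ym τ‖ := by
      rw [hdecomp]
      have := abs_norm_sub_norm_le ((τ • vm + s • xm) + ((zm τ - τ • vm) + s • ym τ))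
        (τ • vm + s • xm)
      simp only [add_sub_cancel_left] at this
      have := abs_le.mp this
      linarith [this.1]
    have htri2 : ‖(zm τ - τ • vm) + s • ym τ‖ ≤ ‖vm‖ / 8 * |τ| + r :=
      le_trans (norm_add_le _ _) (add_le_add key2 key3)
    have hfin : c' * |τ| ≤ |τ| * ‖vm‖ - ‖vm‖ / 8 * |τ| := by
      have m1 := mul_le_mul_of_nonneg_right hc'half (abs_nonneg τ)
      have m2 := mul_nonneg hvmpos.le (abs_nonneg τ)
      nlinarith only [m1, m2]
    have : c * |τ| ≤ c' * |τ| := mul_le_mul_of_nonneg_right hcc' (abs_nonneg τ)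
    simp only [hddef]
    linarith only [htri, htri2, key1, hfin, this]
  -- constants
  set β2 : ℝ := max βl2 βs2 with hβ2def
  have hβ2pos : 0 < β2 := lt_max_of_lt_left hβl2
  set B : ℝ := β2 * ((n:ℝ) * (‖xm‖ + r) + Real.sqrt n) with hBdef
  have hB0 : 0 ≤ B := by
    apply mul_nonneg hβ2pos.le
    have h1 : (0:ℝ) ≤ (n:ℝ) * (‖xm‖ + r) := by positivity
    linarith only [h1, Real.sqrt_nonneg (n:ℝ)]
  -- pointwise bound on the integrand
  have hXpos : ∀ τ : ℝ, τ ≤ 0 → 0 < d - c * τ := by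
    intro τ hτ
    nlinarith only [hcpos, hdpos, hτ]
  have hg : ∀ τ : ℝ, τ ≤ 0 →
      ‖F (zm τ + xm + ym τ) - Fl (zm τ)‖ ≤ B * (d - c * τ) ^ (-(α + 2)) := by
    intro τ hτ
    have hX := hXpos τ hτ
    have habs : d + c * |τ| = d - c * τ := by rw [abs_of_nonpos hτ]; ring
    have hMb : ∀ s ∈ Icc (0:ℝ) 1,
        ‖iteratedFDeriv ℝ 2 Vl (zm τ + s • (xm + ym τ))‖ ≤ βl2 * (d - c * τ) ^ (-(α + 2)) := by
      intro s hs
      refine le_trans (hVl.2.2.2 _) (mul_le_mul_of_nonneg_left ?_ hβl2.le)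
      apply Real.rpow_le_rpow_of_nonpos hX
      · have := hlow τ hτ s hs
        rw [habs] at this
        calc d - c * τ ≤ 1 + ‖zm τ + s • xm + s • ym τ‖ := this
          _ = 1 + ‖zm τ + s • (xm + ym τ)‖ := by rw [smul_add, add_assoc]
      · linarith
    have hFldiff : ‖gradient Vl (zm τ + (xm + ym τ)) - gradient Vl (zm τ)‖
        ≤ (βl2 * (d - c * τ) ^ (-(α + 2))) * ‖xm + ym τ‖ :=
      grad_diff Vl hVl.1 (zm τ) (xm + ym τ) _ hMb
    have hFsbd : ‖gradient Vs (zm τ + xm + ym τ)‖ ≤ βs2 * (d - c * τ) ^ (-(α + 2)) := by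
      refine le_trans (hVs.2.2.1 _) (mul_le_mul_of_nonneg_left ?_ hβs2.le)
      apply Real.rpow_le_rpow_of_nonpos hX
      · have := hlow τ hτ 1 ⟨zero_le_one, le_refl 1⟩
        rw [habs] at this
        simpa using this
      · linarith
    have hwb : ‖xm + ym τ‖ ≤ ‖xm‖ + r :=
      le_trans (norm_add_le _ _) (by linarith [hymr τ hτ])
    have hre : F (zm τ + xm + ym τ) - Fl (zm τ)
        = -(gradient Vl (zm τ + (xm + ym τ)) - gradient Vl (zm τ))
          + -(gradient Vs (zm τ + xm + ym τ)) := by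
      rw [hF, hFl, hFl, hFs, add_assoc]
      abel
    rw [hre]
    have hRpos : (0:ℝ) ≤ (d - c * τ) ^ (-(α + 2)) := Real.rpow_nonneg hX.le _
    calc ‖-(gradient Vl (zm τ + (xm + ym τ)) - gradient Vl (zm τ))
          + -(gradient Vs (zm τ + xm + ym τ))‖
        ≤ ‖gradient Vl (zm τ + (xm + ym τ)) - gradient Vl (zm τ)‖
          + ‖gradient Vs (zm τ + xm + ym τ)‖ := by
          refine le_trans (norm_add_le _ _) ?_
          rw [norm_neg, norm_neg]
      _ ≤ (βl2 * (d - c * τ) ^ (-(α + 2))) * (‖xm‖ + r) + βs2 * (d - c * τ) ^ (-(α + 2)) := by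
          refine add_le_add ?_ hFsbd
          refine le_trans hFldiff ?_
          exact mul_le_mul_of_nonneg_left hwb (by positivity)
      _ ≤ B * (d - c * τ) ^ (-(α + 2)) := by
          rw [hBdef]
          have h3 : (0:ℝ) ≤ ‖xm‖ + r := by positivity
          have e1 : βl2 * (‖xm‖ + r) ≤ β2 * ((n:ℝ) * (‖xm‖ + r)) := by
            have a1 := mul_nonneg (mul_nonneg hβ2pos.le (sub_nonneg.mpr hn1)) h3
            have a2 := mul_nonneg (sub_nonneg.mpr (le_max_left βl2 βs2 : βl2 ≤ β2)) h3
            nlinarith only [a1, a2]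
          have e2 : βs2 ≤ β2 * Real.sqrt n := by
            have a1 := mul_le_mul_of_nonneg_left hsn1 hβ2pos.le
            have a2 : βs2 ≤ β2 := le_max_right _ _
            nlinarith only [a1, a2]
          have m1 := mul_le_mul_of_nonneg_right e1 hRpos
          have m2 := mul_le_mul_of_nonneg_right e2 hRpos
          nlinarith only [m1, m2]
    done
  -- integrand function and continuity
  set gf : ℝ → Euc n := fun τ => F (zm τ + xm + ym τ) - Fl (zm τ) with hgfdef
  have hFlc : Continuous Fl := by
    have hFleq : Fl = fun y => -gradient Vl y := funext hFl
    rw [hFleq]; exact (grad_cont Vl hVl.1).neg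
  have hFsc : Continuous Fs := by
    have hFseq : Fs = fun y => -gradient Vs y := funext hFs
    rw [hFseq]; exact (grad_cont Vs hVs.1).neg
  have hFc : Continuous F := by
    have hFeq : F = fun y => Fl y + Fs y := funext hF
    rw [hFeq]; exact hFlc.add hFsc
  have hzc : Continuous zm := hzm.1.continuous
  have hyc : Continuous ym := hym.1
  have hgfc : Continuous gf := by
    apply Continuous.sub
    · exact hFc.comp ((hzc.add continuous_const).add hyc)
    · exact hFlc.comp hzc
  have hα1pos : (0:ℝ) < α + 1 := by linarith
  have hphi_int : ∀ b : ℝ, b ≤ 0 →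
      IntegrableOn (fun τ : ℝ => B * (d - c * τ) ^ (-(α + 2))) (Iic b) := by
    intro b hb
    have h1 := (integrableOn_aux d c (α + 1) b hcpos hα1pos (hXpos b hb)).const_mul B
    refine IntegrableOn.congr_fun h1 (fun τ _ => ?_) measurableSet_Iic
    rw [show -(α + 1 + 1) = -(α + 2) by ring]
  have hgint : ∀ b : ℝ, IntegrableOn gf (Iic b) := by
    have h0 : ∀ b : ℝ, b ≤ 0 → IntegrableOn gf (Iic b) := by
      intro b hb
      refine Integrable.mono' (hphi_int b hb) (hgfc.aestronglyMeasurable.restrict) ?_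
      filter_upwards [ae_restrict_mem measurableSet_Iic] with τ hτ
      exact hg τ (le_trans (mem_Iic.mp hτ) hb)
    intro b
    rcases le_or_gt b 0 with hb | hb
    · exact h0 b hb
    · have h2 : IntegrableOn gf (Ioc 0 b) :=
        (hgfc.integrableOn_Icc).mono_set Ioc_subset_Icc_self
      have h3 := (h0 0 le_rfl).union h2
      rwa [Iic_union_Ioc_eq_Iic hb.le] at h3
  set G : ℝ → Euc n := fun σ => ∫ τ in Iic σ, gf τ with hGdef
  have hGd : ∀ t : ℝ, HasDerivAt G (gf t) t := hasDerivAt_primitive_Iic gf hgfc hgint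
  have hGc : Continuous G := continuous_iff_continuousAt.mpr fun t => (hGd t).continuousAt
  have hGbd : ∀ σ : ℝ, σ ≤ 0 → ‖G σ‖ ≤ B / (c * (α + 1)) * (d - c * σ) ^ (-(α + 1)) := by
    intro σ hσ
    have h1 : ‖G σ‖ ≤ ∫ τ in Iic σ, B * (d - c * τ) ^ (-(α + 2)) := by
      refine norm_integral_le_of_norm_le (hphi_int σ hσ) ?_
      filter_upwards [ae_restrict_mem measurableSet_Iic] with τ hτ
      exact hg τ (le_trans (mem_Iic.mp hτ) hσ)
    have h2 : ∫ τ in Iic σ, B * (d - c * τ) ^ (-(α + 2))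
        = B * ((d - c * σ) ^ (-(α + 1)) / (c * (α + 1))) := by
      rw [integral_const_mul]
      simp only [show -(α + 2) = -(α + 1 + 1) from by ring]
      rw [integral_aux d c (α + 1) σ hcpos hα1pos (hXpos σ hσ)]
    refine le_trans h1 (le_of_eq ?_)
    rw [h2]; ring
  have hGint : ∀ b : ℝ, IntegrableOn G (Iic b) := by
    have h0 : ∀ b : ℝ, b ≤ 0 → IntegrableOn G (Iic b) := by
      intro b hb
      have h1 := (integrableOn_aux d c α b hcpos hα0 (hXpos b hb)).const_mul (B / (c * (α + 1)))
      refine Integrable.mono' h1 (hGc.aestronglyMeasurable.restrict) ?_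
      filter_upwards [ae_restrict_mem measurableSet_Iic] with σ hσ
      exact hGbd σ (le_trans (mem_Iic.mp hσ) hb)
    intro b
    rcases le_or_gt b 0 with hb | hb
    · exact h0 b hb
    · have h2 : IntegrableOn G (Ioc 0 b) :=
        (hGc.integrableOn_Icc).mono_set Ioc_subset_Icc_self
      have h3 := (h0 0 le_rfl).union h2
      rwa [Iic_union_Ioc_eq_Iic hb.le] at h3
  have hymEq : ym = fun u => ∫ σ in Iic u, G σ := by
    funext u
    conv_lhs => rw [← hfix]
    rfl
  intro t ht
  have hXt := hXpos t ht
  have habs : d + |t| * c = d - c * t := by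
    rw [abs_of_nonpos ht]; ring
  have hder : HasDerivAt ym (G t) t := by
    rw [hymEq]; exact hasDerivAt_primitive_Iic G hGc hGint t
  have hXpow : (0:ℝ) < (d - c * t) ^ (α + 1) := Real.rpow_pos_of_pos hXt _
  have hXpow2 : (0:ℝ) < (d - c * t) ^ α := Real.rpow_pos_of_pos hXt _
  constructor
  · rw [hder.deriv]
    refine le_trans (hGbd t ht) (le_of_eq ?_)
    rw [habs, Real.rpow_neg hXt.le, ← div_eq_mul_inv, div_div, mul_comm c (α + 1)]
  · have h1 : ‖ym t‖ ≤ ∫ σ in Iic t, B / (c * (α + 1)) * (d - c * σ) ^ (-(α + 1)) := by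
      rw [show ym t = ∫ σ in Iic t, G σ from by rw [hymEq]]
      refine norm_integral_le_of_norm_le
        ((integrableOn_aux d c α t hcpos hα0 hXt).const_mul (B / (c * (α + 1)))) ?_
      filter_upwards [ae_restrict_mem measurableSet_Iic] with σ hσ
      exact hGbd σ (le_trans (mem_Iic.mp hσ) ht)
    have h2 : ∫ σ in Iic t, B / (c * (α + 1)) * (d - c * σ) ^ (-(α + 1))
        = B / (c * (α + 1)) * ((d - c * t) ^ (-α) / (c * α)) := by
      rw [integral_const_mul, integral_aux d c α t hcpos hα0 hXt]
    refine le_trans h1 (le_of_eq ?_)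
    rw [h2, habs, Real.rpow_neg hXt.le, div_mul_div_comm, ← div_eq_mul_inv, div_div,
      show (d - c * t) ^ α * (c * (α + 1) * (c * α)) = α * (α + 1) * c ^ 2 * (d - c * t) ^ α
        from by ring]


end Paper
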